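/- arXiv:0908.1843 — 2 statements merged into one kernel-verified Lean document; each statement's English description precedes it below -/
import Mathlib

section
/- Let (E,P) be a random locally convex module over K, x ∈ E, and G ⊆ E a nonempty subset satisfying 1_A·y + 1_{Aᶜ}·z ∈ G for all A ∈ F and y,z ∈ G. Then x belongs to the closure of G in the (ε,λ)-topology if and only if d*(x,G) = 0. -/
open MeasureTheory

section Preamble

variable {Ω : Type*} [MeasurableSpace Ω] {μ : Measure Ω}

/-- `L⁰(F,𝕜)` is a commutative ring under the pointwise operations. -/
noncomputable instance L0.instCommRing {𝕜 : Type*} [RCLike 𝕜] : CommRing (Ω →ₘ[μ] 𝕜) :=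
  { (inferInstance : AddCommGroup (Ω →ₘ[μ] 𝕜)),
    (inferInstance : CommMonoid (Ω →ₘ[μ] 𝕜)) with
    left_distrib := fun f g h => AEEqFun.toGerm_injective <| by
      simp only [AEEqFun.mul_toGerm, AEEqFun.add_toGerm, mul_add]
    right_distrib := fun f g h => AEEqFun.toGerm_injective <| by
      simp only [AEEqFun.mul_toGerm, AEEqFun.add_toGerm, add_mul]
    zero_mul := fun f => AEEqFun.toGerm_injective <| by
      simp only [AEEqFun.mul_toGerm, AEEqFun.zero_toGerm, zero_mul]
    mul_zero := fun f => AEEqFun.toGerm_injective <| by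
      simp only [AEEqFun.mul_toGerm, AEEqFun.zero_toGerm, mul_zero] }

/-- The indicator function of a measurable set `A`, as an element of `L⁰(F,𝕜)`. -/
noncomputable def L0.ind (μ : Measure Ω) (𝕜 : Type*) [RCLike 𝕜] (A : Set Ω)
    (_hA : MeasurableSet A) : Ω →ₘ[μ] 𝕜 :=
  AEEqFun.mk (A.indicator fun _ => (1 : 𝕜))
    (stronglyMeasurable_const.indicator _hA).aestronglyMeasurable

/-- The pointwise modulus `|ξ|` of an element of `L⁰(F,𝕜)`, as an element of `L⁰(F,ℝ)`. -/
noncomputable def L0.abs {𝕜 : Type*} [RCLike 𝕜] (ξ : Ω →ₘ[μ] 𝕜) : Ω →ₘ[μ] ℝ :=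
  AEEqFun.comp (fun z => ‖z‖) continuous_norm ξ

/-- An element of `L⁰(F,ℝ)` is strictly positive on `Ω`, i.e. lies in `L⁰₊₊`. -/
def L0.StrPos (ξ : Ω →ₘ[μ] ℝ) : Prop := ∀ᵐ ω ∂μ, 0 < ξ ω

/-- A countable measurable partition of `Ω`. -/
structure IsMeasPartition {Ω : Type*} [MeasurableSpace Ω] (A : ℕ → Set Ω) : Prop where
  meas : ∀ n, MeasurableSet (A n)
  disj : Pairwise (Function.onFun Disjoint A)
  cover : (⋃ n, A n) = Set.univ

variable {𝕜 : Type*} [RCLike 𝕜] {E : Type*} [AddCommGroup E] [Module (Ω →ₘ[μ] 𝕜) E]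
  {ι : Type*}

/-- `(E, ν)` is a random locally convex module over `𝕜` with base `(Ω,F,P)`: `ν` is a
separating family of `L⁰`-seminorms on the `L⁰(F,𝕜)`-module `E`. -/
structure IsRLCModule (𝕜 : Type*) [RCLike 𝕜] {Ω : Type*} [MeasurableSpace Ω] {μ : Measure Ω}
    {E : Type*} [AddCommGroup E] [Module (Ω →ₘ[μ] 𝕜) E] {ι : Type*} (ν : ι → E → Ω →ₘ[μ] ℝ) : Prop where
  nonneg : ∀ i x, 0 ≤ ν i x
  smul : ∀ i (ξ : Ω →ₘ[μ] 𝕜) x, ν i (ξ • x) = L0.abs ξ * ν i x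
  add_le : ∀ i x y, ν i (x + y) ≤ ν i x + ν i y
  separating : ∀ x, (∀ i, ν i x = 0) → x = 0

/-- `(E, n)` is a random normed module over `𝕜` with base `(Ω,F,P)`. -/
structure IsRNModule (𝕜 : Type*) [RCLike 𝕜] {Ω : Type*} [MeasurableSpace Ω] {μ : Measure Ω}
    {E : Type*} [AddCommGroup E] [Module (Ω →ₘ[μ] 𝕜) E] (n : E → Ω →ₘ[μ] ℝ) : Prop where
  nonneg : ∀ x, 0 ≤ n x
  smul : ∀ (ξ : Ω →ₘ[μ] 𝕜) x, n (ξ • x) = L0.abs ξ * n x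
  add_le : ∀ x y, n (x + y) ≤ n x + n y
  definite : ∀ x, n x = 0 → x = 0

/-- `‖x‖_Q`, the `L⁰`-seminorm associated with a finite nonempty subfamily `Q ⊆ P`. -/
noncomputable def nQ (ν : ι → E → Ω →ₘ[μ] ℝ) (Q : Finset ι) (hQ : Q.Nonempty) (x : E) :
    Ω →ₘ[μ] ℝ :=
  Q.sup' hQ fun i => ν i x

/-- The neighbourhood filter of a point in the locally `L⁰`-convex topology `T_c`,
generated by the balls `x + B_Q(ε)` with `Q` finite and `ε ∈ L⁰₊₊`. -/
noncomputable def tcNhd (ν : ι → E → Ω →ₘ[μ] ℝ) (x : E) : Filter E :=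
  ⨅ (Q : {Q : Finset ι // Q.Nonempty}) (ε : {ε : Ω →ₘ[μ] ℝ // L0.StrPos ε}),
    Filter.principal {y | nQ ν Q.1 Q.2 (y - x) ≤ ε.1}

/-- The locally `L⁰`-convex topology `T_c` on `E` induced by the family `ν`. -/
noncomputable def tcTop (ν : ι → E → Ω →ₘ[μ] ℝ) : TopologicalSpace E :=
  .mkOfNhds (tcNhd ν)

/-- The neighbourhood filter of a point in the `(ε,λ)`-topology, generated by the
neighbourhoods `x + N(Q,ε,λ)`. -/
noncomputable def elNhd (ν : ι → E → Ω →ₘ[μ] ℝ) (x : E) : Filter E :=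
  ⨅ (Q : {Q : Finset ι // Q.Nonempty}) (e : {e : ℝ // 0 < e}) (l : {l : ℝ // 0 < l ∧ l < 1}),
    Filter.principal {y | (μ {ω | nQ ν Q.1 Q.2 (y - x) ω < e.1}).toReal > 1 - l.1}

/-- The `(ε,λ)`-topology on `E` induced by the family `ν`. -/
noncomputable def elTop (ν : ι → E → Ω →ₘ[μ] ℝ) : TopologicalSpace E :=
  .mkOfNhds (elNhd ν)

/-- A net (indexed by a directed preordered type) is Cauchy in the `(ε,λ)`-topology. -/
def ElCauchy (ν : ι → E → Ω →ₘ[μ] ℝ) {J : Type*} [Preorder J] (u : J → E) : Prop :=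
  ∀ (Q : Finset ι) (hQ : Q.Nonempty) (e l : ℝ), 0 < e → 0 < l → l < 1 →
    ∃ j₀, ∀ j k, j₀ ≤ j → j₀ ≤ k →
      (μ {ω | nQ ν Q hQ (u j - u k) ω < e}).toReal > 1 - l

/-- A net converges to `x` in the `(ε,λ)`-topology. -/
def ElLim (ν : ι → E → Ω →ₘ[μ] ℝ) {J : Type*} [Preorder J] (u : J → E) (x : E) : Prop :=
  ∀ (Q : Finset ι) (hQ : Q.Nonempty) (e l : ℝ), 0 < e → 0 < l → l < 1 →
    ∃ j₀, ∀ j, j₀ ≤ j → (μ {ω | nQ ν Q hQ (u j - x) ω < e}).toReal > 1 - l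

/-- `E` is complete in the `(ε,λ)`-topology: every Cauchy net converges. -/
def ElComplete (ν : ι → E → Ω →ₘ[μ] ℝ) : Prop :=
  ∀ (J : Type*) (_ : Preorder J) (_ : IsDirected J (· ≤ ·)) (_ : Nonempty J) (u : J → E),
    ElCauchy ν u → ∃ x, ElLim ν u x

/-- A net is Cauchy in the locally `L⁰`-convex topology `T_c`. -/
def TcCauchy (ν : ι → E → Ω →ₘ[μ] ℝ) {J : Type*} [Preorder J] (u : J → E) : Prop :=
  ∀ (Q : Finset ι) (hQ : Q.Nonempty) (ε : Ω →ₘ[μ] ℝ), L0.StrPos ε →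
    ∃ j₀, ∀ j k, j₀ ≤ j → j₀ ≤ k → nQ ν Q hQ (u j - u k) ≤ ε

/-- A net converges to `x` in the locally `L⁰`-convex topology `T_c`. -/
def TcLim (ν : ι → E → Ω →ₘ[μ] ℝ) {J : Type*} [Preorder J] (u : J → E) (x : E) : Prop :=
  ∀ (Q : Finset ι) (hQ : Q.Nonempty) (ε : Ω →ₘ[μ] ℝ), L0.StrPos ε →
    ∃ j₀, ∀ j, j₀ ≤ j → nQ ν Q hQ (u j - x) ≤ ε

/-- `E` is complete in the locally `L⁰`-convex topology: every Cauchy net converges. -/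
def TcComplete (ν : ι → E → Ω →ₘ[μ] ℝ) : Prop :=
  ∀ (J : Type*) (_ : Preorder J) (_ : IsDirected J (· ≤ ·)) (_ : Nonempty J) (u : J → E),
    TcCauchy ν u → ∃ x, TcLim ν u x

/-- A subset `G` of the `L⁰(F,𝕜)`-module `E` has the countable concatenation property:
every countable concatenation of elements of `G` is well defined and lies in `G`. -/
def HasCCP (μ : Measure Ω) (𝕜 : Type*) [RCLike 𝕜] {E : Type*} [AddCommGroup E]
    [Module (Ω →ₘ[μ] 𝕜) E] (G : Set E) : Prop :=
  ∀ (A : ℕ → Set Ω) (hA : IsMeasPartition A) (x : ℕ → E), (∀ n, x n ∈ G) →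
    ∃ x₀ ∈ G, ∀ n, L0.ind μ 𝕜 (A n) (hA.meas n) • x₀ = L0.ind μ 𝕜 (A n) (hA.meas n) • x n

end Preamble

/-!
Concatenation along the measurable set `{‖x - y‖_Q ≤ ‖x - z‖_Q}` makes the family
`{‖x - y‖_Q : y ∈ G}` downward directed, and for a downward directed family in `L⁰₊` having
infimum `0` is the same as converging to `0` in probability, which is convergence in the
`(ε,λ)`-topology. For the nontrivial half, take `y_n ∈ G` with `‖x - y_n‖_Q` decreasing and
`E[‖x - y_n‖_Q ∧ ε]` tending to its infimum over `G`. By directedness and monotone convergence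
the limit `φ` of `‖x - y_n‖_Q ∧ ε` lies a.e. below every `‖x - y‖_Q`, so `φ = 0`; hence the
infimum of the truncated means is `0`, and Markov's inequality puts some `y ∈ G` into every
basic neighbourhood `x + N(Q,ε,λ)`.
-/

open Filter
open scoped ENNReal

theorem MeasureTheory.AEEqFun.coeFn_finset_sup' {Ω ι : Type*} [MeasurableSpace Ω] {μ : Measure Ω}
    (Q : Finset ι) (hQ : Q.Nonempty) (f : ι → Ω →ₘ[μ] ℝ) :
    ⇑(Q.sup' hQ f) =ᵐ[μ] fun ω => Q.sup' hQ fun i => f i ω := by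
  induction hQ using Finset.Nonempty.cons_induction with
  | singleton i => simp only [Finset.sup'_singleton]; rfl
  | cons i s hi hs ih =>
    simp only [Finset.sup'_cons hs]
    filter_upwards [AEEqFun.coeFn_sup (f i) (s.sup' hs f), ih] with ω h1 h2
    simp [h1, h2]

instance MeasureTheory.AEEqFun.instAddLeftMono {Ω β : Type*} [MeasurableSpace Ω]
    {μ : Measure Ω} [TopologicalSpace β] [Add β] [ContinuousAdd β] [Preorder β]
    [AddLeftMono β] : AddLeftMono (Ω →ₘ[μ] β) where
  elim a b c (hbc : b ≤ c) := by
    change a + b ≤ a + c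
    rw [← AEEqFun.coeFn_le] at hbc ⊢
    filter_upwards [hbc, AEEqFun.coeFn_add a b, AEEqFun.coeFn_add a c] with ω h h1 h2
    simpa [h1, h2] using add_le_add_right h (a ω)

namespace L0

variable {Ω : Type*} [MeasurableSpace Ω] {μ : Measure Ω} {𝕜 : Type*} [RCLike 𝕜]

theorem coeFn_ind (A : Set Ω) (hA : MeasurableSet A) :
    ⇑(L0.ind μ 𝕜 A hA) =ᵐ[μ] A.indicator fun _ => 1 :=
  AEEqFun.coeFn_mk _ _

theorem coeFn_abs (ξ : Ω →ₘ[μ] 𝕜) : ⇑(L0.abs ξ) =ᵐ[μ] fun ω => ‖ξ ω‖ :=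
  AEEqFun.coeFn_comp _ continuous_norm ξ

theorem abs_zero : L0.abs (0 : Ω →ₘ[μ] 𝕜) = 0 := by
  apply AEEqFun.ext
  filter_upwards [coeFn_abs (0 : Ω →ₘ[μ] 𝕜), AEEqFun.coeFn_zero (β := 𝕜) (μ := μ),
    AEEqFun.coeFn_zero (β := ℝ) (μ := μ)] with ω h1 h2 h3
  simp [h1, h2, h3]

theorem abs_neg_one : L0.abs (-1 : Ω →ₘ[μ] 𝕜) = 1 := by
  apply AEEqFun.ext
  filter_upwards [coeFn_abs (-1 : Ω →ₘ[μ] 𝕜), AEEqFun.coeFn_neg (1 : Ω →ₘ[μ] 𝕜),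
    AEEqFun.coeFn_one (β := 𝕜) (μ := μ), AEEqFun.coeFn_one (β := ℝ) (μ := μ)] with ω h1 h2 h3 h4
  simp [h1, h2, h3, h4]

theorem abs_ind (A : Set Ω) (hA : MeasurableSet A) :
    L0.abs (L0.ind μ 𝕜 A hA) = L0.ind μ ℝ A hA := by
  apply AEEqFun.ext
  filter_upwards [coeFn_abs (L0.ind μ 𝕜 A hA), coeFn_ind (μ := μ) (𝕜 := 𝕜) A hA,
    coeFn_ind (μ := μ) (𝕜 := ℝ) A hA] with ω h1 h2 h3
  by_cases hω : ω ∈ A <;> simp [h1, h2, h3, hω]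

theorem ind_add_ind_compl (A : Set Ω) (hA : MeasurableSet A) :
    L0.ind μ 𝕜 A hA + L0.ind μ 𝕜 Aᶜ hA.compl = 1 := by
  apply AEEqFun.ext
  filter_upwards [AEEqFun.coeFn_add (L0.ind μ 𝕜 A hA) (L0.ind μ 𝕜 Aᶜ hA.compl),
    coeFn_ind (μ := μ) (𝕜 := 𝕜) A hA, coeFn_ind (μ := μ) (𝕜 := 𝕜) Aᶜ hA.compl,
    AEEqFun.coeFn_one (β := 𝕜) (μ := μ)] with ω h1 h2 h3 h4
  by_cases hω : ω ∈ A <;> simp [h1, h2, h3, h4, hω]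

theorem ind_mul_self (A : Set Ω) (hA : MeasurableSet A) :
    L0.ind μ 𝕜 A hA * L0.ind μ 𝕜 A hA = L0.ind μ 𝕜 A hA := by
  apply AEEqFun.ext
  filter_upwards [AEEqFun.coeFn_mul (L0.ind μ 𝕜 A hA) (L0.ind μ 𝕜 A hA),
    coeFn_ind (μ := μ) (𝕜 := 𝕜) A hA] with ω h1 h2
  by_cases hω : ω ∈ A <;> simp [h1, h2, hω]

theorem ind_mul_ind_compl (A : Set Ω) (hA : MeasurableSet A) :
    L0.ind μ 𝕜 A hA * L0.ind μ 𝕜 Aᶜ hA.compl = 0 := by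
  rw [eq_sub_of_add_eq' (ind_add_ind_compl (𝕜 := 𝕜) A hA), mul_sub, mul_one, ind_mul_self,
    sub_self]

variable {E : Type*} [AddCommGroup E] [Module (Ω →ₘ[μ] 𝕜) E]

theorem ind_smul_concat (A : Set Ω) (hA : MeasurableSet A) (y z : E) :
    L0.ind μ 𝕜 A hA • (L0.ind μ 𝕜 A hA • y + L0.ind μ 𝕜 Aᶜ hA.compl • z) =
      L0.ind μ 𝕜 A hA • y := by
  rw [smul_add, smul_smul, smul_smul, ind_mul_self, ind_mul_ind_compl, zero_smul, add_zero]

end L0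

theorem nQ_mono {Ω : Type*} [MeasurableSpace Ω] {μ : Measure Ω} {E ι : Type*}
    (ν : ι → E → Ω →ₘ[μ] ℝ) {Q Q' : Finset ι} (hQ : Q.Nonempty) (hQ' : Q'.Nonempty)
    (hsub : Q ⊆ Q') (a : E) :
    nQ ν Q hQ a ≤ nQ ν Q' hQ' a :=
  Finset.sup'_le _ _ fun _ hi => Finset.le_sup' (fun j => ν j a) (hsub hi)

namespace IsRLCModule

variable {Ω : Type*} [MeasurableSpace Ω] {μ : Measure Ω} {𝕜 : Type*} [RCLike 𝕜]
  {E : Type*} [AddCommGroup E] [Module (Ω →ₘ[μ] 𝕜) E] {ι : Type*} {ν : ι → E → Ω →ₘ[μ] ℝ}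
  (hν : IsRLCModule 𝕜 ν) (Q : Finset ι) (hQ : Q.Nonempty)
include hν

theorem nQ_nonneg (a : E) : 0 ≤ nQ ν Q hQ a :=
  (hν.nonneg _ a).trans (Finset.le_sup' (fun j => ν j a) hQ.choose_spec)

theorem nQ_add_le (a b : E) : nQ ν Q hQ (a + b) ≤ nQ ν Q hQ a + nQ ν Q hQ b :=
  Finset.sup'_le _ _ fun i hi => (hν.add_le i a b).trans
    (add_le_add (Finset.le_sup' (fun j => ν j a) hi) (Finset.le_sup' (fun j => ν j b) hi))

theorem nQ_zero : nQ ν Q hQ (0 : E) = 0 := by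
  have hν0 : ∀ i, ν i (0 : E) = 0 := fun i => by
    simpa [L0.abs_zero] using hν.smul i 0 0
  simp only [nQ, hν0, Finset.sup'_const]

theorem nQ_sub_comm (a b : E) : nQ ν Q hQ (a - b) = nQ ν Q hQ (b - a) := by
  have hνneg : ∀ i (c : E), ν i (-c) = ν i c := fun i c => by
    simpa [L0.abs_neg_one] using hν.smul i (-1) c
  simp only [nQ, ← neg_sub b a, hνneg]

theorem ae_nQ_ind_smul_eq {A : Set Ω} (hA : MeasurableSet A) (a : E) :
    ∀ᵐ ω ∂μ, ω ∈ A → nQ ν Q hQ (L0.ind μ 𝕜 A hA • a) ω = nQ ν Q hQ a ω := by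
  have hνi : ∀ i, ν i (L0.ind μ 𝕜 A hA • a) = L0.ind μ ℝ A hA * ν i a := fun i => by
    rw [hν.smul, L0.abs_ind]
  have hpt : ∀ᵐ ω ∂μ, ∀ i ∈ Q, ω ∈ A → ν i (L0.ind μ 𝕜 A hA • a) ω = ν i a ω := by
    refine (eventually_all_finset Q).2 fun i _ => ?_
    filter_upwards [AEEqFun.coeFn_mul (L0.ind μ ℝ A hA) (ν i a),
      L0.coeFn_ind (μ := μ) (𝕜 := ℝ) A hA] with ω h1 h2 hω
    simp [hνi, h1, h2, hω]
  filter_upwards [hpt, AEEqFun.coeFn_finset_sup' Q hQ fun i => ν i (L0.ind μ 𝕜 A hA • a),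
    AEEqFun.coeFn_finset_sup' Q hQ fun i => ν i a] with ω h h1 h2 hω
  simp only [nQ, h1, h2]
  exact Finset.sup'_congr hQ rfl fun i hi => h i hi hω

theorem exists_nQ_sub_le_inf {G : Set E}
    (hGstab : ∀ (A : Set Ω) (hA : MeasurableSet A) (y z : E), y ∈ G → z ∈ G →
      L0.ind μ 𝕜 A hA • y + L0.ind μ 𝕜 Aᶜ hA.compl • z ∈ G)
    (x : E) {y z : E} (hy : y ∈ G) (hz : z ∈ G) :
    ∃ w ∈ G, nQ ν Q hQ (x - w) ≤ nQ ν Q hQ (x - y) ⊓ nQ ν Q hQ (x - z) := by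
  set A := {ω | nQ ν Q hQ (x - y) ω ≤ nQ ν Q hQ (x - z) ω}
  have hA : MeasurableSet A := measurableSet_le (AEEqFun.measurable _) (AEEqFun.measurable _)
  set IA := L0.ind μ 𝕜 A hA
  set IB := L0.ind μ 𝕜 Aᶜ hA.compl
  refine ⟨IA • y + IB • z, hGstab A hA y z hy hz, ?_⟩
  have hIA : IA • (x - (IA • y + IB • z)) = IA • (x - y) := by
    rw [smul_sub, smul_sub, L0.ind_smul_concat]
  have hIB : IB • (x - (IA • y + IB • z)) = IB • (x - z) := by
    rw [add_comm, smul_sub, smul_sub]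
    simpa only [compl_compl] using congrArg (IB • x - ·) (L0.ind_smul_concat Aᶜ hA.compl z y)
  rw [← AEEqFun.coeFn_le]
  filter_upwards [hν.ae_nQ_ind_smul_eq Q hQ hA (x - (IA • y + IB • z)),
    hν.ae_nQ_ind_smul_eq Q hQ hA (x - y),
    hν.ae_nQ_ind_smul_eq Q hQ hA.compl (x - (IA • y + IB • z)),
    hν.ae_nQ_ind_smul_eq Q hQ hA.compl (x - z),
    AEEqFun.coeFn_inf (nQ ν Q hQ (x - y)) (nQ ν Q hQ (x - z))] with ω hwA hyA hwB hzB hinf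
  rw [hinf]
  by_cases hω : ω ∈ A
  · rw [← hwA hω, hIA, hyA hω]
    exact le_inf le_rfl hω
  · rw [← hwB hω, hIB, hzB hω]
    exact le_inf (not_le.mp hω).le le_rfl

theorem directedOn_nQ_sub {G : Set E}
    (hGstab : ∀ (A : Set Ω) (hA : MeasurableSet A) (y z : E), y ∈ G → z ∈ G →
      L0.ind μ 𝕜 A hA • y + L0.ind μ 𝕜 Aᶜ hA.compl • z ∈ G) (x : E) :
    DirectedOn (· ≥ ·) {c | ∃ y ∈ G, c = nQ ν Q hQ (x - y)} := by
  rintro _ ⟨y, hy, rfl⟩ _ ⟨z, hz, rfl⟩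
  obtain ⟨w, hw, hle⟩ := hν.exists_nQ_sub_le_inf Q hQ hGstab x hy hz
  exact ⟨_, ⟨w, hw, rfl⟩, hle.trans inf_le_left, hle.trans inf_le_right⟩

end IsRLCModule

theorem DirectedOn.exists_antitone_le_seq {α : Type*} [Preorder α] {S : Set α}
    (hdir : DirectedOn (· ≥ ·) S) {c : ℕ → α} (hc : ∀ n, c n ∈ S) :
    ∃ d : ℕ → α, (∀ n, d n ∈ S) ∧ Antitone d ∧ ∀ n, d n ≤ c n := by
  choose! m hmS hm using hdir
  let d : ℕ → α := fun n => Nat.rec (c 0) (fun n dn => m dn (c (n + 1))) n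
  have hd : ∀ n, d n ∈ S := fun n => by
    induction n with
    | zero => exact hc 0
    | succ n ih => exact hmS _ ih _ (hc _)
  refine ⟨d, hd, antitone_nat_of_succ_le fun n => (hm _ (hd n) _ (hc _)).1, ?_⟩
  rintro (_ | n)
  exacts [le_rfl, (hm _ (hd n) _ (hc _)).2]

theorem ENNReal.eq_zero_of_forall_lt_ofReal {m : ℝ≥0∞}
    (h : ∀ l : ℝ, 0 < l → l < 1 → m < ENNReal.ofReal l) : m = 0 := by
  by_contra hm
  have hm_top : m ≠ ⊤ := (h (1 / 2) (by norm_num) (by norm_num)).trans ENNReal.ofReal_lt_top |>.ne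
  have hpos : 0 < m.toReal := ENNReal.toReal_pos hm hm_top
  have hlt := h (min m.toReal (1 / 2)) (lt_min hpos (by norm_num))
    ((min_le_right _ _).trans_lt (by norm_num))
  rw [ENNReal.lt_ofReal_iff_toReal_lt hm_top] at hlt
  exact (hlt.trans_le (min_le_left _ _)).false

namespace L0

variable {Ω : Type*} [MeasurableSpace Ω] {μ : Measure Ω}

theorem nonpos_of_forall_measure_le_eq_zero {c : Ω →ₘ[μ] ℝ}
    (h : ∀ e : ℝ, 0 < e → μ {ω | e ≤ c ω} = 0) : c ≤ 0 := by
  have hpos : μ {ω | 0 < c ω} = 0 := by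
    refine measure_mono_null (fun ω (hω : 0 < c ω) => ?_)
      (measure_iUnion_null fun n : ℕ => h (1 / (n + 1)) Nat.one_div_pos_of_nat)
    obtain ⟨n, hn⟩ := exists_nat_one_div_lt hω
    exact Set.mem_iUnion.mpr ⟨n, hn.le⟩
  rw [← AEEqFun.coeFn_le]
  filter_upwards [measure_eq_zero_iff_ae_notMem.mp hpos, AEEqFun.coeFn_zero (β := ℝ) (μ := μ)]
    with ω h1 h2
  simpa [h2] using h1

noncomputable def truncOfReal (e : ℝ) (c : Ω →ₘ[μ] ℝ) (ω : Ω) : ℝ≥0∞ :=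
  ENNReal.ofReal (min (c ω) e)

theorem measurable_truncOfReal (e : ℝ) (c : Ω →ₘ[μ] ℝ) : Measurable (truncOfReal e c) :=
  ENNReal.measurable_ofReal.comp (c.measurable.min measurable_const)

theorem truncOfReal_le (e : ℝ) (c : Ω →ₘ[μ] ℝ) (ω : Ω) : truncOfReal e c ω ≤ ENNReal.ofReal e :=
  ENNReal.ofReal_le_ofReal (min_le_right _ _)

theorem truncOfReal_mono (e : ℝ) {c c' : Ω →ₘ[μ] ℝ} (h : c ≤ c') :
    truncOfReal e c ≤ᵐ[μ] truncOfReal e c' := by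
  filter_upwards [AEEqFun.coeFn_le.2 h] with ω hω
  exact ENNReal.ofReal_le_ofReal (min_le_min_right e hω)

theorem lintegral_truncOfReal_ne_top [IsFiniteMeasure μ] (e : ℝ) (c : Ω →ₘ[μ] ℝ) :
    ∫⁻ ω, truncOfReal e c ω ∂μ ≠ ∞ :=
  ne_top_of_le_ne_top (by simpa using ENNReal.mul_ne_top ENNReal.ofReal_ne_top (measure_ne_top μ _))
    (lintegral_mono (truncOfReal_le e c))

theorem ae_eq_zero_of_isGLB_zero {S : Set (Ω →ₘ[μ] ℝ)} (hglb : IsGLB S 0) {φ : Ω → ℝ≥0∞}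
    (hφm : Measurable φ) (hφ_top : ∀ ω, φ ω ≠ ∞)
    (hφ : ∀ c ∈ S, φ ≤ᵐ[μ] fun ω => ENNReal.ofReal (c ω)) : φ =ᵐ[μ] 0 := by
  set c₀ : Ω →ₘ[μ] ℝ := AEEqFun.mk (fun ω => (φ ω).toReal) hφm.ennreal_toReal.aestronglyMeasurable
  have hc₀ : c₀ ≤ 0 := hglb.2 fun c hc => by
    rw [← AEEqFun.coeFn_le]
    filter_upwards [AEEqFun.coeFn_mk _ hφm.ennreal_toReal.aestronglyMeasurable, hφ c hc,
      AEEqFun.coeFn_le.2 (hglb.1 hc), AEEqFun.coeFn_zero (β := ℝ) (μ := μ)] with ω h1 h2 h3 h4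
    rw [h1]
    exact ENNReal.toReal_le_of_le_ofReal (by simpa [h4] using h3) h2
  filter_upwards [AEEqFun.coeFn_le.2 hc₀,
    AEEqFun.coeFn_mk _ hφm.ennreal_toReal.aestronglyMeasurable,
    AEEqFun.coeFn_zero (β := ℝ) (μ := μ)] with ω h1 h2 h3
  rw [h2, h3] at h1
  exact ((ENNReal.toReal_eq_zero_iff _).1 (le_antisymm h1 ENNReal.toReal_nonneg)).resolve_right
    (hφ_top ω)

variable [IsFiniteMeasure μ] {S : Set (Ω →ₘ[μ] ℝ)}

theorem ae_iInf_truncOfReal_le (hdir : DirectedOn (· ≥ ·) S) (e : ℝ) {d : ℕ → Ω →ₘ[μ] ℝ}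
    (hd : ∀ n, d n ∈ S) (hanti : Antitone d)
    (hδ : ∫⁻ ω, ⨅ n, truncOfReal e (d n) ω ∂μ ≤ ⨅ c ∈ S, ∫⁻ ω, truncOfReal e c ω ∂μ)
    {c : Ω →ₘ[μ] ℝ} (hc : c ∈ S) :
    (fun ω => ⨅ n, truncOfReal e (d n) ω) ≤ᵐ[μ] truncOfReal e c := by
  set φ := fun ω => ⨅ n, truncOfReal e (d n) ω
  have hint : ∫⁻ ω, φ ω ⊓ truncOfReal e c ω ∂μ =
      ⨅ n, ∫⁻ ω, truncOfReal e (d n) ω ⊓ truncOfReal e c ω ∂μ := by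
    simp only [φ, iInf_inf]
    exact lintegral_iInf_ae (fun n => (measurable_truncOfReal e _).min (measurable_truncOfReal e c))
      (fun n => (truncOfReal_mono e (hanti n.le_succ)).mono fun ω h => inf_le_inf_right _ h)
      (ne_top_of_le_ne_top (lintegral_truncOfReal_ne_top e (d 0))
        (lintegral_mono fun ω => inf_le_left))
  have hge : ∫⁻ ω, φ ω ∂μ ≤ ∫⁻ ω, φ ω ⊓ truncOfReal e c ω ∂μ := by
    rw [hint]
    refine hδ.trans (le_iInf fun n => ?_)
    obtain ⟨w, hw, hwd, hwc⟩ := hdir _ (hd n) _ hc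
    refine (biInf_le _ hw).trans (lintegral_mono_ae ?_)
    filter_upwards [truncOfReal_mono e hwd, truncOfReal_mono e hwc] with ω h1 h2
    exact le_inf h1 h2
  have hφm : Measurable φ := Measurable.iInf fun n => measurable_truncOfReal e (d n)
  filter_upwards [ae_eq_of_ae_le_of_lintegral_le (ae_of_all _ fun ω => inf_le_left)
    (ne_top_of_le_ne_top (lintegral_truncOfReal_ne_top e c) (lintegral_mono fun ω => inf_le_right))
    hφm.aemeasurable hge] with ω h
  exact inf_eq_left.mp h

theorem iInf_lintegral_truncOfReal_eq_zero (hS : S.Nonempty) (hdir : DirectedOn (· ≥ ·) S)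
    (hglb : IsGLB S 0) (e : ℝ) : ⨅ c ∈ S, ∫⁻ ω, truncOfReal e c ω ∂μ = 0 := by
  set T : (Ω →ₘ[μ] ℝ) → ℝ≥0∞ := fun c => ∫⁻ ω, truncOfReal e c ω ∂μ
  obtain ⟨u, hu_anti, hu_lim, hu_mem⟩ :=
    exists_seq_tendsto_sInf (hS.image T) (OrderBot.bddBelow _)
  choose c hcS hcu using hu_mem
  obtain ⟨d, hdS, hanti, hdc⟩ := hdir.exists_antitone_le_seq hcS
  set φ := fun ω => ⨅ n, truncOfReal e (d n) ω
  have hφ : ∫⁻ ω, φ ω ∂μ = ⨅ n, T (d n) :=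
    lintegral_iInf_ae (fun n => measurable_truncOfReal e (d n))
      (fun n => truncOfReal_mono e (hanti n.le_succ)) (lintegral_truncOfReal_ne_top e (d 0))
  have hφ_le : ∫⁻ ω, φ ω ∂μ ≤ ⨅ c ∈ S, T c := by
    rw [hφ, ← sInf_image, ← iInf_eq_of_tendsto hu_anti hu_lim]
    exact iInf_mono fun n => (lintegral_mono_ae (truncOfReal_mono e (hdc n))).trans (hcu n).le
  have hφ0 : φ =ᵐ[μ] 0 := by
    refine ae_eq_zero_of_isGLB_zero hglb (Measurable.iInf fun n => measurable_truncOfReal e (d n))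
      (fun ω => ne_top_of_le_ne_top ENNReal.ofReal_ne_top ((iInf_le _ 0).trans
        (truncOfReal_le e (d 0) ω))) fun c hc => ?_
    filter_upwards [ae_iInf_truncOfReal_le hdir e hdS hanti hφ_le hc] with ω h
    exact h.trans (ENNReal.ofReal_le_ofReal (min_le_left _ _))
  refine le_antisymm ?_ bot_le
  calc ⨅ c ∈ S, T c ≤ ⨅ n, T (d n) := le_iInf fun n => biInf_le _ (hdS n)
    _ = 0 := by rw [← hφ, lintegral_congr_ae hφ0]; simp

theorem exists_measure_le_lt_of_isGLB_zero (hS : S.Nonempty) (hdir : DirectedOn (· ≥ ·) S)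
    (hglb : IsGLB S 0) {e : ℝ} (he : 0 < e) {η : ℝ≥0∞} (hη : η ≠ 0) :
    ∃ c ∈ S, μ {ω | e ≤ c ω} < η := by
  have hpos : 0 < ENNReal.ofReal e * η := ENNReal.mul_pos (ENNReal.ofReal_pos.2 he).ne' hη
  rw [← iInf_lintegral_truncOfReal_eq_zero hS hdir hglb e] at hpos
  obtain ⟨c, hc, hlt⟩ : ∃ c ∈ S, ∫⁻ ω, truncOfReal e c ω ∂μ < ENNReal.ofReal e * η := by
    simpa only [iInf_lt_iff, exists_prop] using hpos
  refine ⟨c, hc, ?_⟩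
  have hsub : {ω | e ≤ c ω} ⊆ {ω | ENNReal.ofReal e ≤ truncOfReal e c ω} := by
    intro ω (hω : e ≤ c ω)
    simp only [Set.mem_ofPred_eq, truncOfReal, min_eq_right hω, le_rfl]
  have hmarkov := mul_meas_ge_le_lintegral₀ (measurable_truncOfReal e c).aemeasurable
    (ENNReal.ofReal e) (μ := μ)
  refine (ENNReal.mul_lt_mul_iff_right (ENNReal.ofReal_pos.2 he).ne' ENNReal.ofReal_ne_top).1 ?_
  calc ENNReal.ofReal e * μ {ω | e ≤ c ω}
      ≤ ENNReal.ofReal e * μ {ω | ENNReal.ofReal e ≤ truncOfReal e c ω} := by gcongr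
    _ < ENNReal.ofReal e * η := hmarkov.trans_lt hlt

end L0

theorem MeasureTheory.one_sub_lt_toReal_measure_lt_iff {Ω : Type*} [MeasurableSpace Ω]
    {μ : Measure Ω} [IsProbabilityMeasure μ] (f : Ω →ₘ[μ] ℝ) (e l : ℝ) :
    1 - l < (μ {ω | f ω < e}).toReal ↔ μ {ω | e ≤ f ω} < ENNReal.ofReal l := by
  have hcompl : {ω | f ω < e} = {ω | e ≤ f ω}ᶜ := by ext; simp [not_le]
  rw [hcompl, prob_compl_eq_one_sub (measurableSet_le measurable_const f.measurable),
    ENNReal.toReal_sub_of_le prob_le_one ENNReal.one_ne_top, ENNReal.toReal_one,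
    ENNReal.lt_ofReal_iff_toReal_lt (measure_ne_top μ _), sub_lt_sub_iff_left]

section ElTopology

variable {Ω : Type*} [MeasurableSpace Ω] {μ : Measure Ω} {𝕜 : Type*} [RCLike 𝕜]
  {E : Type*} [AddCommGroup E] [Module (Ω →ₘ[μ] 𝕜) E] {ι : Type*} {ν : ι → E → Ω →ₘ[μ] ℝ}

variable (ν) in
/-- The basic neighbourhood `x + N(Q,e,l)`, with `P(‖y - x‖_Q < e) > 1 - l` rewritten through
the complementary event. -/
def elBall (x : E) (Q : Finset ι) (hQ : Q.Nonempty) (e l : ℝ) : Set E :=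
  {y | μ {ω | e ≤ nQ ν Q hQ (y - x) ω} < ENNReal.ofReal l}

theorem elBall_subset_elBall {x : E} {Q Q' : Finset ι} {hQ : Q.Nonempty} {hQ' : Q'.Nonempty}
    {e e' l l' : ℝ} (hsub : Q ⊆ Q') (he : e' ≤ e) (hl : l' ≤ l) :
    elBall ν x Q' hQ' e' l' ⊆ elBall ν x Q hQ e l := by
  intro y (hy : μ _ < _)
  refine lt_of_le_of_lt (measure_mono_ae ?_) (hy.trans_le (ENNReal.ofReal_le_ofReal hl))
  filter_upwards [AEEqFun.coeFn_le.2 (nQ_mono ν hQ hQ' hsub (y - x))] with ω hω (h : e ≤ _)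
  exact he.trans (h.trans hω)

theorem IsRLCModule.mem_elBall_self (hν : IsRLCModule 𝕜 ν) (x : E) (Q : Finset ι)
    (hQ : Q.Nonempty) {e l : ℝ} (he : 0 < e) (hl : 0 < l) : x ∈ elBall ν x Q hQ e l := by
  have hnull : μ {ω | e ≤ nQ ν Q hQ (x - x) ω} = 0 := by
    rw [sub_self, hν.nQ_zero, measure_eq_zero_iff_ae_notMem]
    filter_upwards [AEEqFun.coeFn_zero (β := ℝ) (μ := μ)] with ω h
    simpa [h] using he
  show μ _ < _
  rw [hnull]
  exact ENNReal.ofReal_pos.2 hl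

theorem IsRLCModule.mem_elBall_add (hν : IsRLCModule 𝕜 ν) {x y z : E} {Q : Finset ι}
    {hQ : Q.Nonempty} {e₁ e₂ l₁ l₂ : ℝ} (hl₁ : 0 ≤ l₁) (hl₂ : 0 ≤ l₂)
    (hy : y ∈ elBall ν x Q hQ e₁ l₁) (hz : z ∈ elBall ν y Q hQ e₂ l₂) :
    z ∈ elBall ν x Q hQ (e₁ + e₂) (l₁ + l₂) := by
  have hsub : {ω | e₁ + e₂ ≤ nQ ν Q hQ (z - x) ω} ≤ᵐ[μ]
      ({ω | e₁ ≤ nQ ν Q hQ (y - x) ω} ∪ {ω | e₂ ≤ nQ ν Q hQ (z - y) ω} : Set Ω) := by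
    have htri := hν.nQ_add_le Q hQ (y - x) (z - y)
    rw [add_comm, sub_add_sub_cancel, ← AEEqFun.coeFn_le] at htri
    filter_upwards [htri, AEEqFun.coeFn_add (nQ ν Q hQ (y - x)) (nQ ν Q hQ (z - y))]
      with ω h1 h2 (h : e₁ + e₂ ≤ _)
    show e₁ ≤ _ ∨ e₂ ≤ _
    by_contra! hω
    rw [h2, Pi.add_apply] at h1
    linarith [hω.1, hω.2]
  calc μ {ω | e₁ + e₂ ≤ nQ ν Q hQ (z - x) ω}
      ≤ μ {ω | e₁ ≤ nQ ν Q hQ (y - x) ω} + μ {ω | e₂ ≤ nQ ν Q hQ (z - y) ω} :=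
        (measure_mono_ae hsub).trans (measure_union_le _ _)
    _ < ENNReal.ofReal l₁ + ENNReal.ofReal l₂ := ENNReal.add_lt_add hy hz
    _ = ENNReal.ofReal (l₁ + l₂) := (ENNReal.ofReal_add hl₁ hl₂).symm

variable [IsProbabilityMeasure μ]

variable (ν) in
theorem elNhd_eq_iInf (x : E) :
    elNhd ν x = ⨅ p : {Q : Finset ι // Q.Nonempty} × {e : ℝ // 0 < e} × {l : ℝ // 0 < l ∧ l < 1},
      𝓟 (elBall ν x p.1.1 p.1.2 p.2.1.1 p.2.2.1) := by
  simp only [elNhd, iInf_prod, elBall, gt_iff_lt, one_sub_lt_toReal_measure_lt_iff]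

theorem elBall_mem_elNhd (x : E) (Q : Finset ι) (hQ : Q.Nonempty) {e l : ℝ} (he : 0 < e)
    (hl : 0 < l) (hl₁ : l < 1) : elBall ν x Q hQ e l ∈ elNhd ν x := by
  rw [elNhd_eq_iInf]
  exact mem_iInf_of_mem ⟨⟨Q, hQ⟩, ⟨e, he⟩, ⟨l, hl, hl₁⟩⟩ (mem_principal_self _)

theorem IsRLCModule.nhds_elTop (hν : IsRLCModule 𝕜 ν) (x : E) :
    @nhds E (elTop ν) x = elNhd ν x := by
  refine TopologicalSpace.nhds_mkOfNhds _ _ (fun a => ?_) fun a s hs => ?_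
  · rw [elNhd_eq_iInf]
    exact le_iInf fun p => (pure_le_principal _).2 (hν.mem_elBall_self a _ p.1.2 p.2.1.2 p.2.2.2.1)
  · suffices (elNhd ν a).bind (elNhd ν) ≤ elNhd ν a from mem_bind'.1 (this hs)
    refine le_trans ?_ (elNhd_eq_iInf ν a).ge
    refine le_iInf fun ⟨⟨Q, hQ⟩, ⟨e, he⟩, ⟨l, hl, hl₁⟩⟩ => le_principal_iff.2 (mem_bind'.2 ?_)
    filter_upwards [elBall_mem_elNhd a Q hQ (half_pos he) (half_pos hl) (by linarith)] with y hy
    refine mem_of_superset (elBall_mem_elNhd y Q hQ (half_pos he) (half_pos hl) (by linarith))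
      fun z hz => ?_
    simpa only [add_halves] using hν.mem_elBall_add (half_pos hl).le (half_pos hl).le hy hz

theorem IsRLCModule.mem_elClosure_iff (hν : IsRLCModule 𝕜 ν) {x : E} {G : Set E}
    (hG : G.Nonempty) :
    x ∈ @closure E (elTop ν) G ↔ ∀ (Q : Finset ι) (hQ : Q.Nonempty) (e l : ℝ),
      0 < e → 0 < l → l < 1 → ∃ y ∈ G, y ∈ elBall ν x Q hQ e l := by
  let _ := elTop ν
  constructor
  · intro hx Q hQ e l he hl hl₁
    obtain ⟨y, hyB, hyG⟩ :=
      mem_closure_iff_nhds.1 hx _ (hν.nhds_elTop x ▸ elBall_mem_elNhd x Q hQ he hl hl₁)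
    exact ⟨y, hyG, hyB⟩
  · intro h
    classical
    have := hG.to_subtype
    rw [mem_closure_iff_comap_neBot, hν.nhds_elTop, elNhd_eq_iInf, comap_iInf]
    refine iInf_neBot_of_directed ?_ fun p => ?_
    · rintro ⟨⟨Q₁, hQ₁⟩, ⟨e₁, he₁⟩, ⟨l₁, hl₁⟩⟩ ⟨⟨Q₂, hQ₂⟩, ⟨e₂, he₂⟩, ⟨l₂, hl₂⟩⟩
      refine ⟨⟨⟨Q₁ ∪ Q₂, hQ₁.mono Finset.subset_union_left⟩, ⟨min e₁ e₂, lt_min he₁ he₂⟩,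
        ⟨min l₁ l₂, lt_min hl₁.1 hl₂.1, (min_le_left _ _).trans_lt hl₁.2⟩⟩, ?_, ?_⟩ <;>
      exact comap_mono (principal_mono.2 (elBall_subset_elBall (by simp) (by simp) (by simp)))
    · obtain ⟨y, hyG, hyB⟩ := h _ p.1.2 _ _ p.2.1.2 p.2.2.2.1 p.2.2.2.2
      rw [comap_principal, principal_neBot_iff]
      exact ⟨⟨y, hyG⟩, hyB⟩

theorem IsRLCModule.isGLB_nQ_sub_iff (hν : IsRLCModule 𝕜 ν) {x : E} {G : Set E}
    (hG : G.Nonempty)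
    (hGstab : ∀ (A : Set Ω) (hA : MeasurableSet A) (y z : E), y ∈ G → z ∈ G →
      L0.ind μ 𝕜 A hA • y + L0.ind μ 𝕜 Aᶜ hA.compl • z ∈ G)
    (Q : Finset ι) (hQ : Q.Nonempty) :
    IsGLB {c | ∃ y ∈ G, c = nQ ν Q hQ (x - y)} 0 ↔
      ∀ e l : ℝ, 0 < e → 0 < l → l < 1 → ∃ y ∈ G, y ∈ elBall ν x Q hQ e l := by
  constructor
  · intro hglb e l he hl _
    obtain ⟨y₀, hy₀⟩ := hG
    have hS : {c | ∃ y ∈ G, c = nQ ν Q hQ (x - y)}.Nonempty := ⟨_, y₀, hy₀, rfl⟩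
    obtain ⟨_, ⟨y, hy, rfl⟩, hlt⟩ := L0.exists_measure_le_lt_of_isGLB_zero hS
      (hν.directedOn_nQ_sub Q hQ hGstab x) hglb he (ENNReal.ofReal_pos.2 hl).ne'
    exact ⟨y, hy, show μ _ < _ by rwa [hν.nQ_sub_comm]⟩
  · intro h
    refine ⟨?_, fun c hc => L0.nonpos_of_forall_measure_le_eq_zero fun e he =>
      ENNReal.eq_zero_of_forall_lt_ofReal fun l hl hl₁ => ?_⟩
    · rintro _ ⟨y, -, rfl⟩
      exact hν.nQ_nonneg Q hQ _
    · obtain ⟨y, hyG, hyB : μ _ < _⟩ := h e l he hl hl₁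
      refine lt_of_le_of_lt (measure_mono_ae ?_) hyB
      filter_upwards [AEEqFun.coeFn_le.2 (hc ⟨y, hyG, rfl⟩)] with ω hω (h' : e ≤ c ω)
      show e ≤ nQ ν Q hQ (y - x) ω
      rw [hν.nQ_sub_comm]
      exact h'.trans hω

end ElTopology

/-- **Lemma 3.14 (3).** Let `(E,P)` be a random locally convex module, `x ∈ E` and `G ⊆ E`
a nonempty subset satisfying `1_A·y + 1_{Aᶜ}·z ∈ G` for all `A ∈ F` and `y, z ∈ G`. Then `x`
lies in the closure of `G` in the `(ε,λ)`-topology iff `d*(x,G) = 0` (equivalently, since all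
`d*_Q(x,G)` are nonnegative, iff `0` is the greatest lower bound of `{‖x−y‖_Q : y ∈ G}` for
every finite nonempty `Q ⊆ P`). -/
theorem mem_elClosure_iff_dStar_eq_zero {Ω : Type*} [MeasurableSpace Ω] {μ : Measure Ω}
    [IsProbabilityMeasure μ] {𝕜 : Type*} [RCLike 𝕜] {E : Type*} [AddCommGroup E]
    [Module (Ω →ₘ[μ] 𝕜) E] {ι : Type*} (ν : ι → E → Ω →ₘ[μ] ℝ) (hν : IsRLCModule 𝕜 ν)
    (x : E) (G : Set E) (hG : G.Nonempty)
    (hGstab : ∀ (A : Set Ω) (hA : MeasurableSet A) (y z : E), y ∈ G → z ∈ G →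
      L0.ind μ 𝕜 A hA • y + L0.ind μ 𝕜 Aᶜ hA.compl • z ∈ G) :
    x ∈ @closure E (elTop ν) G ↔
      ∀ (Q : Finset ι) (hQ : Q.Nonempty),
        IsGLB {c | ∃ y ∈ G, c = nQ ν Q hQ (x - y)} 0 := by
  rw [hν.mem_elClosure_iff hG]
  exact forall₂_congr fun Q hQ => (hν.isGLB_nQ_sub_iff hG hGstab Q hQ).symm
end

section
/- Let (E,‖·‖) be a random normed module over K with base (Ω,F,P), and E* its random conjugate space with ‖f‖* = ∧{ξ ∈ L⁰₊ : |f(x)| ≤ ξ‖x‖ for all x ∈ E}. Then for every f ∈ E*, ‖f‖* = ∨{|f(x)| : x ∈ E, ‖x‖ ≤ 1}. -/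
open MeasureTheory

/-- For an element `f` of the random conjugate space `E*` of a random normed module
`(E,‖·‖)`, the random norm `‖f‖* = ∧{ξ ∈ L⁰₊ : |f(x)| ≤ ξ‖x‖ ∀x}` coincides with
`∨{|f(x)| : x ∈ E, ‖x‖ ≤ 1}`: an element of `L⁰(F,ℝ)` is the greatest lower bound of the
first set iff it is the least upper bound of the second. -/
theorem random_operator_norm_eq_sup {Ω : Type*} [MeasurableSpace Ω] {μ : Measure Ω}
    [IsProbabilityMeasure μ] {𝕜 : Type*} [RCLike 𝕜] {E : Type*} [AddCommGroup E]
    [Module (Ω →ₘ[μ] 𝕜) E] (n : E → Ω →ₘ[μ] ℝ) (hn : IsRNModule 𝕜 n)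
    (f : E →ₗ[Ω →ₘ[μ] 𝕜] Ω →ₘ[μ] 𝕜)
    (hf : ∃ ξ : Ω →ₘ[μ] ℝ, 0 ≤ ξ ∧ ∀ x : E, L0.abs (f x) ≤ ξ * n x) :
    ∀ c : Ω →ₘ[μ] ℝ,
      IsGLB {ξ : Ω →ₘ[μ] ℝ | 0 ≤ ξ ∧ ∀ x : E, L0.abs (f x) ≤ ξ * n x} c ↔
      IsLUB {e : Ω →ₘ[μ] ℝ | ∃ x : E, n x ≤ 1 ∧ e = L0.abs (f x)} c := by
  classical
  intro c
  obtain ⟨ξ₀, hξ₀, hξ₀f⟩ := hf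
  set S : Set (Ω →ₘ[μ] ℝ) := {ξ | 0 ≤ ξ ∧ ∀ x : E, L0.abs (f x) ≤ ξ * n x} with hS
  set T : Set (Ω →ₘ[μ] ℝ) := {e | ∃ x : E, n x ≤ 1 ∧ e = L0.abs (f x)} with hT
  -- coeFn description of `L0.abs`
  have habs : ∀ η : Ω →ₘ[μ] 𝕜, (L0.abs η : Ω → ℝ) =ᵐ[μ] fun ω => ‖η ω‖ := fun η =>
    AEEqFun.coeFn_comp _ continuous_norm η
  -- every element of S dominates every element of T
  have key : ∀ ξ ∈ S, ∀ e ∈ T, e ≤ ξ := by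
    rintro ξ ⟨hξ0, hξ⟩ e ⟨x, hx1, rfl⟩
    refine le_trans (hξ x) ?_
    rw [← AEEqFun.coeFn_le]
    have h0 : (0 : Ω → ℝ) ≤ᵐ[μ] ξ := (AEEqFun.coeFn_zero (β := ℝ)).symm.trans_le
      (AEEqFun.coeFn_le.2 hξ0)
    have h1 : (n x : Ω → ℝ) ≤ᵐ[μ] fun _ => (1 : ℝ) :=
      (AEEqFun.coeFn_le.2 hx1).trans_eq (AEEqFun.coeFn_one (β := ℝ))
    filter_upwards [AEEqFun.coeFn_mul ξ (n x), h0, h1] with ω hmul h0ω h1ω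
    calc (ξ * n x) ω = ξ ω * (n x) ω := hmul
      _ ≤ ξ ω * 1 := mul_le_mul_of_nonneg_left h1ω h0ω
      _ = ξ ω := mul_one _
  -- every upper bound of T lies in S
  have ub_mem : ∀ b ∈ upperBounds T, b ∈ S := by
    intro b hb
    -- first, `0 ∈ T` (via x = 0), hence `0 ≤ b`
    have hn0 : n 0 = 0 := by
      have := hn.smul (0 : Ω →ₘ[μ] 𝕜) (0 : E)
      rw [zero_smul] at this
      have habs0 : L0.abs (0 : Ω →ₘ[μ] 𝕜) = 0 := by
        refine AEEqFun.ext ?_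
        filter_upwards [habs (0 : Ω →ₘ[μ] 𝕜), AEEqFun.coeFn_zero (β := 𝕜),
          AEEqFun.coeFn_zero (β := ℝ)] with ω h1 h2 h3
        simp [h1, h2, h3]
      rw [habs0, zero_mul] at this
      exact this
    have habsf0 : L0.abs (f 0) = 0 := by
      rw [map_zero]
      refine AEEqFun.ext ?_
      filter_upwards [habs (0 : Ω →ₘ[μ] 𝕜), AEEqFun.coeFn_zero (β := 𝕜),
        AEEqFun.coeFn_zero (β := ℝ)] with ω h1 h2 h3
      simp [h1, h2, h3]
    have h01 : (0 : Ω →ₘ[μ] ℝ) ≤ 1 := by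
      rw [← AEEqFun.coeFn_le]
      filter_upwards [AEEqFun.coeFn_zero (β := ℝ), AEEqFun.coeFn_one (β := ℝ)] with ω hz ho
      rw [hz, ho]; exact zero_le_one
    have hb0 : (0 : Ω →ₘ[μ] ℝ) ≤ b := by
      have hmem : L0.abs (f (0 : E)) ∈ T := ⟨0, by rw [hn0]; exact h01, rfl⟩
      have := hb hmem
      rwa [habsf0] at this
    refine ⟨hb0, fun x => ?_⟩
    -- construct the scalar `h = (n x)⁻¹` on `{n x > 0}`
    have hg : AEMeasurable (n x : Ω → ℝ) μ := (n x).aestronglyMeasurable.aemeasurable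
    set g' : Ω → ℝ := hg.mk _ with hg'def
    have hg'm : Measurable g' := hg.measurable_mk
    have hgg' : (n x : Ω → ℝ) =ᵐ[μ] g' := hg.ae_eq_mk
    set h : Ω → ℝ := fun ω => if 0 < g' ω then (g' ω)⁻¹ else 0 with hdef
    have hhm : Measurable h := Measurable.ite (measurableSet_lt measurable_const hg'm)
      hg'm.inv measurable_const
    have hhnn : ∀ ω, 0 ≤ h ω := by
      intro ω
      by_cases hω : 0 < g' ω
      · simp only [hdef, if_pos hω]
        exact le_of_lt (inv_pos.2 hω)
      · simp [hdef, hω]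
    set ξk : Ω →ₘ[μ] 𝕜 := AEEqFun.mk (fun ω => ((h ω : ℝ) : 𝕜))
      ((RCLike.continuous_ofReal.measurable.comp hhm).aestronglyMeasurable) with hξkdef
    have hξkcoe : (ξk : Ω → 𝕜) =ᵐ[μ] fun ω => ((h ω : ℝ) : 𝕜) := AEEqFun.coeFn_mk _ _
    have habsξk : (L0.abs ξk : Ω → ℝ) =ᵐ[μ] h := by
      filter_upwards [habs ξk, hξkcoe] with ω h1 h2
      rw [h1, h2, RCLike.norm_ofReal, abs_of_nonneg (hhnn ω)]
    -- `n (ξk • x) ≤ 1`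
    have hny : n (ξk • x) ≤ 1 := by
      rw [hn.smul, ← AEEqFun.coeFn_le]
      filter_upwards [AEEqFun.coeFn_mul (L0.abs ξk) (n x), habsξk, hgg',
        AEEqFun.coeFn_one (β := ℝ)] with ω h1 h2 h3 h4
      rw [h1, Pi.mul_apply, h2, h3, h4, Pi.one_apply]
      by_cases hω : 0 < g' ω
      · simp only [hdef, if_pos hω]
        rw [inv_mul_cancel₀ (ne_of_gt hω)]
      · simp [hdef, if_neg hω]
    -- hence `|f (ξk • x)| ≤ b`, i.e. `h * |f x| ≤ b` a.e.
    have hmemT : L0.abs (f (ξk • x)) ∈ T := ⟨ξk • x, hny, rfl⟩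
    have hble := hb hmemT
    have hfy : ∀ᵐ ω ∂μ, h ω * ‖(f x) ω‖ ≤ b ω := by
      have heq : f (ξk • x) = ξk * f x := by rw [_root_.map_smul, smul_eq_mul]
      rw [heq, ← AEEqFun.coeFn_le] at hble
      filter_upwards [hble, habs (ξk * f x), AEEqFun.coeFn_mul ξk (f x), hξkcoe]
        with ω h1 h2 h3 h4
      have : ‖(ξk * f x) ω‖ = h ω * ‖(f x) ω‖ := by
        rw [h3]
        simp only [Pi.mul_apply, norm_mul, h4, RCLike.norm_ofReal,
          abs_of_nonneg (hhnn ω)]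
      rw [h2, this] at h1
      exact h1
    -- auxiliary a.e. facts
    have hfx : ∀ᵐ ω ∂μ, ‖(f x) ω‖ ≤ ξ₀ ω * g' ω := by
      have := AEEqFun.coeFn_le.2 (hξ₀f x)
      filter_upwards [this, habs (f x), AEEqFun.coeFn_mul ξ₀ (n x), hgg']
        with ω h1 h2 h3 h4
      rw [h2, h3, Pi.mul_apply, h4] at h1
      exact h1
    have hgnn : ∀ᵐ ω ∂μ, 0 ≤ g' ω := by
      have := AEEqFun.coeFn_le.2 (hn.nonneg x)
      filter_upwards [this, hgg', AEEqFun.coeFn_zero (β := ℝ)] with ω h1 h2 h3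
      rw [← h2]; rw [h3] at h1; exact h1
    have hbnn : ∀ᵐ ω ∂μ, 0 ≤ b ω := by
      have := AEEqFun.coeFn_le.2 hb0
      filter_upwards [this, AEEqFun.coeFn_zero (β := ℝ)] with ω h1 h2
      rw [h2] at h1; exact h1
    -- conclude `|f x| ≤ b * n x`
    rw [← AEEqFun.coeFn_le]
    filter_upwards [AEEqFun.coeFn_mul b (n x), hgg', hfy, hfx, hgnn, hbnn, habs (f x)]
      with ω h1 h2 h3 h4 h5 h6 h7
    rw [h7, h1, Pi.mul_apply, h2]
    by_cases hω : 0 < g' ω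
    · have hh : h ω = (g' ω)⁻¹ := by simp [hdef, hω]
      rw [hh] at h3
      have := mul_le_mul_of_nonneg_left h3 (le_of_lt hω)
      rw [← mul_assoc, mul_inv_cancel₀ (ne_of_gt hω), one_mul] at this
      linarith [this]
    · have hg0 : g' ω = 0 := le_antisymm (not_lt.1 hω) h5
      have : ‖(f x) ω‖ ≤ 0 := by rw [hg0, mul_zero] at h4; exact h4
      have h0 : ‖(f x) ω‖ = 0 := le_antisymm this (norm_nonneg _)
      rw [h0, hg0, mul_zero]
  constructor
  · intro hc
    constructor
    · intro e he
      exact hc.2 fun ξ hξ => key ξ hξ e he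
    · intro b hb
      exact hc.1 (ub_mem b hb)
  · intro hc
    constructor
    · intro ξ hξ
      exact hc.2 fun e he => key ξ hξ e he
    · intro d hd
      exact hd (ub_mem c hc.1)
end
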